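/- arXiv:0904.0491 — 2 statements merged into one kernel-verified Lean document; each statement's English description precedes it below -/
import Mathlib

section
/- Let H be a group, T ⊆ H a subset closed under conjugation, and γ : H × T → ℂˣ a function satisfying γ(1,t) = 1 and γ(gh, t) = γ(g, hth⁻¹) γ(h, t) for all g, h ∈ H and t ∈ T. Let V be the free complex vector space on basis {v_t : t ∈ T} and define c : V ⊗ V → V ⊗ V by c(v_s ⊗ v_t) = γ(s,t) v_{sts⁻¹} ⊗ v_s. Then c satisfies the braid equation (c ⊗ 1)(1 ⊗ c)(c ⊗ 1) = (1 ⊗ c)(c ⊗ 1)(1 ⊗ c). -/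
open TensorProduct

/-- Given a group `H`, a conjugation-closed subset `T`, and a function
`γ : H × T → ℂˣ` with `γ(1,t) = 1` and `γ(gh,t) = γ(g, hth⁻¹)γ(h,t)`, the
operator `c(v_s ⊗ v_t) = γ(s,t) v_{sts⁻¹} ⊗ v_s` on the free complex vector
space on `T` satisfies the braid equation. -/
theorem stmt8 {H : Type*} [Group H] (T : Set H)
    (hT : ∀ (g : H) (t : T), g * (t : H) * g⁻¹ ∈ T)
    (γ : H → T → ℂˣ)
    (hγ1 : ∀ t : T, γ 1 t = 1)
    (hγ : ∀ (g h : H) (t : T), γ (g * h) t = γ g ⟨h * (t : H) * h⁻¹, hT h t⟩ * γ h t)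
    (c : (T →₀ ℂ) ⊗[ℂ] (T →₀ ℂ) →ₗ[ℂ] (T →₀ ℂ) ⊗[ℂ] (T →₀ ℂ))
    (hc : ∀ s t : T,
      c (Finsupp.single s (1 : ℂ) ⊗ₜ[ℂ] Finsupp.single t (1 : ℂ)) =
        (γ (s : H) t : ℂ) •
          (Finsupp.single (⟨(s : H) * (t : H) * (s : H)⁻¹, hT s t⟩ : T) (1 : ℂ)
            ⊗ₜ[ℂ] Finsupp.single s (1 : ℂ))) :
    (TensorProduct.map c LinearMap.id) ∘ₗ
        ((TensorProduct.assoc ℂ (T →₀ ℂ) (T →₀ ℂ) (T →₀ ℂ)).symm.toLinearMap ∘ₗ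
          (TensorProduct.map LinearMap.id c) ∘ₗ
          (TensorProduct.assoc ℂ (T →₀ ℂ) (T →₀ ℂ) (T →₀ ℂ)).toLinearMap) ∘ₗ
        (TensorProduct.map c LinearMap.id) =
      ((TensorProduct.assoc ℂ (T →₀ ℂ) (T →₀ ℂ) (T →₀ ℂ)).symm.toLinearMap ∘ₗ
          (TensorProduct.map LinearMap.id c) ∘ₗ
          (TensorProduct.assoc ℂ (T →₀ ℂ) (T →₀ ℂ) (T →₀ ℂ)).toLinearMap) ∘ₗ
        (TensorProduct.map c LinearMap.id) ∘ₗ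
        ((TensorProduct.assoc ℂ (T →₀ ℂ) (T →₀ ℂ) (T →₀ ℂ)).symm.toLinearMap ∘ₗ
          (TensorProduct.map LinearMap.id c) ∘ₗ
          (TensorProduct.assoc ℂ (T →₀ ℂ) (T →₀ ℂ) (T →₀ ℂ)).toLinearMap) := by
  ext s t u
  simp only [LinearMap.compr₂_apply, TensorProduct.mk_apply, LinearMap.coe_comp,
    Function.comp_apply, LinearEquiv.coe_coe, TensorProduct.map_tmul, LinearMap.id_coe, id_eq,
    TensorProduct.AlgebraTensorModule.curry_apply, TensorProduct.curry_apply,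
    LinearMap.coe_restrictScalars, Finsupp.lsingle_apply,
    hc, ← TensorProduct.smul_tmul', TensorProduct.tmul_smul, map_smul,
    TensorProduct.assoc_tmul, TensorProduct.assoc_symm_tmul]
  have h1 := hγ ((s:H) * t * (s:H)⁻¹) (s:H) u
  have h2 := hγ (s:H) (t:H) u
  rw [show ((s:H) * t * (s:H)⁻¹ * s : H) = (s:H) * t by group, h2] at h1
  have h1' := congrArg Units.val h1
  push_cast at h1'
  rw [smul_smul, smul_smul, smul_smul, smul_smul]
  congr 1
  · linear_combination (-((γ (s:H) t : ℂˣ) : ℂ)) * h1'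
  · exact congrArg (fun x : T => (Finsupp.single x (1:ℂ) ⊗ₜ[ℂ]
      Finsupp.single (⟨(s:H)*(t:H)*(s:H)⁻¹, hT s t⟩ : T) (1:ℂ)) ⊗ₜ[ℂ] Finsupp.single s (1:ℂ))
      (Subtype.ext (by group))
end

section
/- Let μ and μ' be two probability measures on a measurable space X, both quasi-invariant and ergodic with respect to an action of a countable group G by measurable bijections. If μ and μ' are not equivalent, then they are disjoint: there exists a measurable set F with μ(F) = 1 and μ'(F) = 0. -/
open MeasureTheory

/-!
If `μ` is not absolutely continuous with respect to `μ'`, pick a measurable `μ'`-null set `E`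
that `μ` charges. Its `G`-saturation `⋃ g, g • E` is still `μ'`-null, as a countable union of
`μ'`-null sets by quasi-invariance, and it is `G`-invariant, so by ergodicity of `μ` it has full
`μ`-measure. If instead `μ'` is not absolutely continuous with respect to `μ`, swap the roles and
take the complement.
-/

section OrbitSaturation

variable {G X : Type*} [MeasurableSpace X] (π : G → X ≃ᵐ X)

def orbitSaturation (E : Set X) : Set X := ⋃ g, π g '' E

variable {π}

theorem measurableSet_orbitSaturation [Countable G] {E : Set X} (hE : MeasurableSet E) :
    MeasurableSet (orbitSaturation π E) :=
  .iUnion fun g => (π g).measurableSet_image.2 hE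

theorem subset_orbitSaturation [One G] (hπone : ∀ x : X, π (1 : G) x = x) (E : Set X) :
    E ⊆ orbitSaturation π E :=
  fun x hx => Set.mem_iUnion.2 ⟨1, x, hx, hπone x⟩

theorem image_orbitSaturation [Group G]
    (hπmul : ∀ g h : G, ∀ x : X, π (g * h) x = π g (π h x)) (g : G) (E : Set X) : π g '' orbitSaturation π E = orbitSaturation π E := by
  have image_image : ∀ h : G, π g '' (π h '' E) = π (g * h) '' E := fun h => by
    rw [← Set.image_comp]
    exact Set.image_congr fun x _ => (hπmul g h x).symm
  simp only [orbitSaturation, Set.image_iUnion, image_image]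
  exact (Equiv.mulLeft g).iSup_comp (g := fun h => π h '' E)

theorem measure_orbitSaturation_eq_zero [Countable G] {ν : Measure X}
    (hqi : ∀ (g : G) (E : Set X), MeasurableSet E → ν E = 0 → ν (π g '' E) = 0)
    {E : Set X} (hE : MeasurableSet E) (hE0 : ν E = 0) : ν (orbitSaturation π E) = 0 :=
  measure_iUnion_null fun g => hqi g E hE hE0

end OrbitSaturation

theorem exists_measure_eq_one_and_eq_zero_of_not_absolutelyContinuous
    {G X : Type*} [Group G] [Countable G] [MeasurableSpace X] {π : G → X ≃ᵐ X}
    (hπmul : ∀ g h : G, ∀ x : X, π (g * h) x = π g (π h x))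
    (hπone : ∀ x : X, π (1 : G) x = x) {ν ν' : Measure X}
    (hqi' : ∀ (g : G) (E : Set X), MeasurableSet E → ν' E = 0 → ν' (π g '' E) = 0)
    (herg : ∀ E : Set X, MeasurableSet E → (∀ g : G, π g '' E = E) → ν E = 0 ∨ ν E = 1)
    (hne : ¬ ν ≪ ν') :
    ∃ F : Set X, MeasurableSet F ∧ ν F = 1 ∧ ν' F = 0 := by
  obtain ⟨E, hE, hE0', hE0⟩ : ∃ E, MeasurableSet E ∧ ν' E = 0 ∧ ν E ≠ 0 := by
    by_contra! h
    exact hne (.mk h)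
  refine ⟨orbitSaturation π E, measurableSet_orbitSaturation hE, ?_,
    measure_orbitSaturation_eq_zero hqi' hE hE0'⟩
  exact (herg _ (measurableSet_orbitSaturation hE) (image_orbitSaturation hπmul · E)).resolve_left
    fun h => hE0 (measure_mono_null (subset_orbitSaturation hπone E) h)

/-- Two ergodic quasi-invariant probability measures for an action of a
countable group are either equivalent or not comparable: if `μ'` is absolutely
continuous with respect to `μ`, then they are mutually absolutely continuous;
if they are not equivalent then they are disjoint. -/
theorem stmt11 {G : Type*} [Group G] [Countable G]
    {X : Type*} [MeasurableSpace X]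
    (π : G → (X ≃ᵐ X))
    (hπmul : ∀ g h : G, ∀ x : X, π (g * h) x = π g (π h x))
    (hπone : ∀ x : X, π (1 : G) x = x)
    (μ μ' : Measure X) [IsProbabilityMeasure μ] [IsProbabilityMeasure μ']
    (hqi : ∀ (g : G) (E : Set X), MeasurableSet E → (μ E = 0 ↔ μ (π g '' E) = 0))
    (hqi' : ∀ (g : G) (E : Set X), MeasurableSet E → (μ' E = 0 ↔ μ' (π g '' E) = 0))
    (herg : ∀ E : Set X, MeasurableSet E → (∀ g : G, π g '' E = E) →
      μ E = 0 ∨ μ E = 1)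
    (herg' : ∀ E : Set X, MeasurableSet E → (∀ g : G, π g '' E = E) →
      μ' E = 0 ∨ μ' E = 1)
    (hne : ¬ (μ ≪ μ' ∧ μ' ≪ μ)) :
    ∃ F : Set X, MeasurableSet F ∧ μ F = 1 ∧ μ' F = 0 := by
  rcases not_and_or.1 hne with hμ | hμ'
  · exact exists_measure_eq_one_and_eq_zero_of_not_absolutelyContinuous hπmul hπone
      (fun g E hE => (hqi' g E hE).1) herg hμ
  · obtain ⟨F, hF, hF1, hF0⟩ := exists_measure_eq_one_and_eq_zero_of_not_absolutelyContinuous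
      hπmul hπone (fun g E hE => (hqi g E hE).1) herg' hμ'
    exact ⟨Fᶜ, hF.compl, (prob_compl_eq_one_iff hF).2 hF0, (prob_compl_eq_zero_iff hF).2 hF1⟩
end
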